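/- arXiv:math/0312444 — 4 statements merged into one kernel-verified Lean document; each statement's English description precedes it below -/
import Mathlib

section
/- Let X and Y be non-negative independent random variables such that lim_{x→∞} x⁻¹ log P(X > x) = -α and lim_{x→∞} x⁻¹ log P(Y > x) = -α for some α > 0. Then lim_{x→∞} x⁻¹ log P(X + Y > x) = -α. -/
open MeasureTheory ProbabilityTheory Filter

private lemma tail_exp_bound {F : ℝ → ℝ} {α α' : ℝ} (hα : 0 < α) (hα' : α' < α)
    (hF0 : ∀ x, 0 ≤ F x)
    (h : Tendsto (fun x => x⁻¹ * Real.log (F x)) atTop (nhds (-α))) :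
    ∀ᶠ x in atTop, 0 < F x ∧ F x ≤ Real.exp (-α' * x) := by
  have h1 : ∀ᶠ x in atTop, x⁻¹ * Real.log (F x) < -α' :=
    h.eventually_lt_const (by linarith)
  have h2 : ∀ᶠ x in atTop, x⁻¹ * Real.log (F x) < -(α / 2) :=
    h.eventually_lt_const (by linarith)
  filter_upwards [h1, h2, eventually_gt_atTop (0 : ℝ)] with x hx1 hx2 hx0
  have hinv : 0 < x⁻¹ := inv_pos.2 hx0
  have hlog : Real.log (F x) < 0 := by nlinarith
  have hFpos : 0 < F x := by
    rcases lt_or_eq_of_le (hF0 x) with hp | hp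
    · exact hp
    · exfalso; rw [← hp, Real.log_zero] at hlog; linarith
  refine ⟨hFpos, ?_⟩
  have hl : Real.log (F x) < x * (-α') := (inv_mul_lt_iff₀ hx0).mp hx1
  have : F x ≤ Real.exp (x * (-α')) := by
    rw [← Real.exp_log hFpos]
    exact Real.exp_le_exp.2 hl.le
  simpa [mul_comm] using this

private lemma scaled_bound {F : ℝ → ℝ} {α' : ℝ} (hα' : 0 < α') (hF1 : ∀ x, F x ≤ 1)
    (h : ∀ᶠ x in atTop, F x ≤ Real.exp (-α' * x)) (c : ℝ) :
    ∀ᶠ x in atTop, F (c * x) ≤ Real.exp (-α' * max c 0 * x) := by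
  rcases le_or_gt c 0 with hc | hc
  · filter_upwards with x
    rw [max_eq_right hc]
    simpa using hF1 (c * x)
  · have htc : Tendsto (fun x : ℝ => c * x) atTop atTop :=
      (tendsto_id (α := ℝ)).const_mul_atTop hc
    filter_upwards [htc.eventually h] with x hx
    rw [max_eq_left hc.le]
    calc F (c * x) ≤ Real.exp (-α' * (c * x)) := hx
      _ = Real.exp (-α' * c * x) := by ring_nf

private lemma cover_lemma {Ω : Type*} {X Y : Ω → ℝ}
    (hX0 : ∀ ω, 0 ≤ X ω) (hY0 : ∀ ω, 0 ≤ Y ω) {n : ℕ} (hn : 4 ≤ n) {x : ℝ} (hx : 0 < x) :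
    {ω | x < X ω + Y ω} ⊆
      ⋃ k ∈ Finset.range n,
        (X ⁻¹' Set.Ioi (((k : ℝ) - 1) / n * x) ∩ Y ⁻¹' Set.Ioi (((n : ℝ) - 2 - k) / n * x)) := by
  intro ω hω
  simp only [Set.mem_setOf_eq] at hω
  simp only [Set.mem_iUnion, Finset.mem_range, Set.mem_inter_iff, Set.mem_preimage,
    Set.mem_Ioi, exists_prop]
  have hn0 : (0 : ℝ) < n := by exact_mod_cast (by omega : 0 < n)
  set t := x / n with ht
  have htpos : 0 < t := div_pos hx hn0
  have hxt : x = n * t := by rw [ht]; field_simp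
  have key : ∀ c : ℝ, c / n * x = c * t := by intro c; rw [ht]; ring
  by_cases hc : ((n : ℝ) - 1) * t ≤ X ω
  · refine ⟨n - 1, by omega, ?_, ?_⟩
    · rw [key]
      have : ((n - 1 : ℕ) : ℝ) = (n : ℝ) - 1 := by
        push_cast [Nat.cast_sub (by omega : 1 ≤ n)]; ring
      rw [this]
      nlinarith
    · rw [key]
      have : ((n - 1 : ℕ) : ℝ) = (n : ℝ) - 1 := by
        push_cast [Nat.cast_sub (by omega : 1 ≤ n)]; ring
      rw [this]
      nlinarith [hY0 ω]
  · push_neg at hc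
    set k := ⌊X ω / t⌋₊ with hk
    have hdivnn : 0 ≤ X ω / t := div_nonneg (hX0 ω) htpos.le
    have hfl : (k : ℝ) ≤ X ω / t := Nat.floor_le hdivnn
    have hfl2 : X ω / t < (k : ℝ) + 1 := Nat.lt_floor_add_one _
    have hXlb : (k : ℝ) * t ≤ X ω := (le_div_iff₀ htpos).mp hfl
    have hXub : X ω < ((k : ℝ) + 1) * t := (div_lt_iff₀ htpos).mp hfl2
    have hkn : k < n := by
      have : (k : ℝ) < (n : ℝ) - 1 := by nlinarith
      have : (k : ℝ) < (n : ℝ) := by linarith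
      exact_mod_cast this
    refine ⟨k, hkn, ?_, ?_⟩
    · rw [key]; nlinarith
    · rw [key]; nlinarith

theorem decay_rate_sum_eq {Ω : Type*} [MeasurableSpace Ω] (μ : Measure Ω)
    [IsProbabilityMeasure μ] (X Y : Ω → ℝ) (hX : Measurable X) (hY : Measurable Y)
    (hX0 : ∀ ω, 0 ≤ X ω) (hY0 : ∀ ω, 0 ≤ Y ω)
    (hindep : IndepFun X Y μ) (α : ℝ) (hα : 0 < α)
    (hdX : Tendsto (fun x : ℝ => x⁻¹ * Real.log (μ {ω | x < X ω}).toReal)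
      atTop (nhds (-α)))
    (hdY : Tendsto (fun x : ℝ => x⁻¹ * Real.log (μ {ω | x < Y ω}).toReal)
      atTop (nhds (-α))) :
    Tendsto (fun x : ℝ => x⁻¹ * Real.log (μ {ω | x < X ω + Y ω}).toReal)
      atTop (nhds (-α)) := by
  set F : ℝ → ℝ := fun a => (μ (X ⁻¹' Set.Ioi a)).toReal with hF
  set G : ℝ → ℝ := fun a => (μ (Y ⁻¹' Set.Ioi a)).toReal with hG
  set H : ℝ → ℝ := fun a => (μ {ω | a < X ω + Y ω}).toReal with hH
  have hFeq : ∀ a, (μ {ω | a < X ω}).toReal = F a := fun a => rfl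
  have hGeq : ∀ a, (μ {ω | a < Y ω}).toReal = G a := fun a => rfl
  have hF0 : ∀ a, 0 ≤ F a := fun a => ENNReal.toReal_nonneg
  have hG0 : ∀ a, 0 ≤ G a := fun a => ENNReal.toReal_nonneg
  have hF1 : ∀ a, F a ≤ 1 := fun a => by
    simpa using ENNReal.toReal_mono ENNReal.one_ne_top (prob_le_one (μ := μ))
  have hG1 : ∀ a, G a ≤ 1 := fun a => by
    simpa using ENNReal.toReal_mono ENNReal.one_ne_top (prob_le_one (μ := μ))
  have hH1 : ∀ a, H a ≤ 1 := fun a => by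
    simpa using ENNReal.toReal_mono ENNReal.one_ne_top (prob_le_one (μ := μ))
  have hdX' : Tendsto (fun x : ℝ => x⁻¹ * Real.log (F x)) atTop (nhds (-α)) := hdX
  have hdY' : Tendsto (fun x : ℝ => x⁻¹ * Real.log (G x)) atTop (nhds (-α)) := hdY
  -- F ≤ H
  have hFH : ∀ a, F a ≤ H a := by
    intro a
    apply ENNReal.toReal_mono (measure_ne_top μ _)
    apply measure_mono
    intro ω hω
    simp only [Set.mem_preimage, Set.mem_Ioi] at hω
    simp only [Set.mem_setOf_eq]
    nlinarith [hY0 ω]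
  -- upper bound: for every ε with 0 < ε ≤ α, eventually x⁻¹ log H x < -α + ε
  have upper : ∀ ε : ℝ, 0 < ε → ε ≤ α →
      ∀ᶠ x in atTop, x⁻¹ * Real.log (H x) < -α + ε := by
    intro ε hε hεα
    set α' : ℝ := α - ε / 4 with hα'def
    have hα'pos : 0 < α' := by rw [hα'def]; linarith
    have hα'lt : α' < α := by rw [hα'def]; linarith
    obtain ⟨n, hn4, hnge⟩ : ∃ n : ℕ, 4 ≤ n ∧ 12 * α / ε ≤ (n : ℝ) := by
      obtain ⟨m, hm⟩ := exists_nat_ge (12 * α / ε)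
      exact ⟨max 4 m, le_max_left _ _, hm.trans (by exact_mod_cast le_max_right 4 m)⟩
    have hn0 : (0 : ℝ) < n := by exact_mod_cast (by omega : 0 < n)
    -- rate bound
    have hrate : α - ε / 2 ≤ α' * ((n : ℝ) - 3) / n := by
      rw [le_div_iff₀ hn0]
      have h12 : 12 * α ≤ ε * n := by
        have := (div_le_iff₀ hε).mp hnge
        linarith
      rw [hα'def]
      nlinarith
    have hFX := tail_exp_bound hα hα'lt hF0 hdX'
    have hFY := tail_exp_bound hα hα'lt hG0 hdY'
    have hterm : ∀ k ∈ Finset.range n, ∀ᶠ x in atTop,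
        F (((k : ℝ) - 1) / n * x) * G (((n : ℝ) - 2 - k) / n * x) ≤
          Real.exp (-(α' * (((n : ℝ) - 3) / n)) * x) := by
      intro k _
      have hbF := scaled_bound hα'pos hF1 (hFX.mono fun x hx => hx.2) (((k : ℝ) - 1) / n)
      have hbG := scaled_bound hα'pos hG1 (hFY.mono fun x hx => hx.2) (((n : ℝ) - 2 - k) / n)
      filter_upwards [hbF, hbG, eventually_ge_atTop (0 : ℝ)] with x hx1 hx2 hx0
      set c : ℝ := ((k : ℝ) - 1) / n with hc
      set d : ℝ := ((n : ℝ) - 2 - k) / n with hd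
      have hsum : ((n : ℝ) - 3) / n ≤ max c 0 + max d 0 := by
        have h1 : c ≤ max c 0 := le_max_left _ _
        have h2 : d ≤ max d 0 := le_max_left _ _
        have hcd : c + d = ((n : ℝ) - 3) / n := by rw [hc, hd]; field_simp; ring
        linarith
      calc F (c * x) * G (d * x)
          ≤ Real.exp (-α' * max c 0 * x) * Real.exp (-α' * max d 0 * x) :=
            mul_le_mul hx1 hx2 (hG0 _) (Real.exp_nonneg _)
        _ = Real.exp (-(α' * (max c 0 + max d 0)) * x) := by rw [← Real.exp_add]; ring_nf
        _ ≤ Real.exp (-(α' * (((n : ℝ) - 3) / n)) * x) := by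
            apply Real.exp_le_exp.2
            nlinarith [mul_le_mul_of_nonneg_right
              (mul_le_mul_of_nonneg_left hsum hα'pos.le) hx0]
    have hall := (eventually_all_finset (Finset.range n)).2 hterm
    have hlogn : Tendsto (fun x : ℝ => x⁻¹ * Real.log n) atTop (nhds 0) := by
      simpa using tendsto_inv_atTop_zero.mul_const (Real.log n)
    have hlogn' : ∀ᶠ x in atTop, x⁻¹ * Real.log n < ε / 2 :=
      hlogn.eventually_lt_const (by linarith)
    filter_upwards [hall, hFX, eventually_gt_atTop (0 : ℝ), hlogn'] with x hallx hFXx hx0 hlognx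
    have hcov := cover_lemma hX0 hY0 hn4 hx0
    have hmeas : μ {ω | x < X ω + Y ω} ≤
        ∑ k ∈ Finset.range n, μ (X ⁻¹' Set.Ioi (((k : ℝ) - 1) / n * x) ∩
          Y ⁻¹' Set.Ioi (((n : ℝ) - 2 - k) / n * x)) :=
      (measure_mono hcov).trans (measure_biUnion_finset_le _ _)
    have hHsum : H x ≤ ∑ k ∈ Finset.range n,
        F (((k : ℝ) - 1) / n * x) * G (((n : ℝ) - 2 - k) / n * x) := by
      calc H x ≤ (∑ k ∈ Finset.range n, μ (X ⁻¹' Set.Ioi (((k : ℝ) - 1) / n * x) ∩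
              Y ⁻¹' Set.Ioi (((n : ℝ) - 2 - k) / n * x))).toReal := by
            apply ENNReal.toReal_mono _ hmeas
            refine (lt_of_le_of_lt (Finset.sum_le_sum (fun k _ => (measure_mono
              Set.inter_subset_left).trans prob_le_one)) ?_).ne
            simp only [Finset.sum_const, Finset.card_range, nsmul_eq_mul, mul_one]
            exact ENNReal.natCast_lt_top n
        _ = ∑ k ∈ Finset.range n, (μ (X ⁻¹' Set.Ioi (((k : ℝ) - 1) / n * x) ∩
              Y ⁻¹' Set.Ioi (((n : ℝ) - 2 - k) / n * x))).toReal :=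
            ENNReal.toReal_sum fun k _ => measure_ne_top μ _
        _ = ∑ k ∈ Finset.range n,
              F (((k : ℝ) - 1) / n * x) * G (((n : ℝ) - 2 - k) / n * x) := by
            refine Finset.sum_congr rfl fun k _ => ?_
            rw [hindep.measure_inter_preimage_eq_mul _ _ measurableSet_Ioi measurableSet_Ioi,
              ENNReal.toReal_mul]
    have hHle : H x ≤ n * Real.exp (-(α' * (((n : ℝ) - 3) / n)) * x) := by
      calc H x ≤ ∑ k ∈ Finset.range n,
              F (((k : ℝ) - 1) / n * x) * G (((n : ℝ) - 2 - k) / n * x) := hHsum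
        _ ≤ ∑ _k ∈ Finset.range n, Real.exp (-(α' * (((n : ℝ) - 3) / n)) * x) :=
            Finset.sum_le_sum hallx
        _ = n * Real.exp (-(α' * (((n : ℝ) - 3) / n)) * x) := by
            simp [Finset.sum_const, Finset.card_range, nsmul_eq_mul]
    have hHpos : 0 < H x := lt_of_lt_of_le hFXx.1 (hFH x)
    have hn0' : (0:ℝ) < n := hn0
    have hlogle : Real.log (H x) ≤ Real.log n + -(α' * (((n : ℝ) - 3) / n)) * x := by
      calc Real.log (H x) ≤ Real.log (n * Real.exp (-(α' * (((n : ℝ) - 3) / n)) * x)) :=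
            Real.log_le_log hHpos hHle
        _ = Real.log n + -(α' * (((n : ℝ) - 3) / n)) * x := by
            rw [Real.log_mul (by positivity) (Real.exp_ne_zero _), Real.log_exp]
    have hinv : 0 < x⁻¹ := inv_pos.2 hx0
    have hkey : x⁻¹ * Real.log (H x) ≤ x⁻¹ * Real.log n - α' * (((n : ℝ) - 3) / n) := by
      have h1 := mul_le_mul_of_nonneg_left hlogle hinv.le
      have h2 : x⁻¹ * (Real.log n + -(α' * (((n : ℝ) - 3) / n)) * x) =
          x⁻¹ * Real.log n - α' * (((n : ℝ) - 3) / n) := by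
        field_simp
        ring
      linarith [h2 ▸ h1]
    have hrate' : α' * (((n : ℝ) - 3) / n) = α' * ((n : ℝ) - 3) / n := by ring
    rw [hrate'] at hkey
    linarith
  rw [tendsto_order]
  constructor
  · intro a ha
    have h1 : ∀ᶠ x in atTop, a < x⁻¹ * Real.log (F x) := hdX'.eventually_const_lt ha
    have h2 := tail_exp_bound hα (show α / 2 < α by linarith) hF0 hdX'
    filter_upwards [h1, h2, eventually_gt_atTop (0 : ℝ)] with x hx1 hx2 hx0
    have hlog : Real.log (F x) ≤ Real.log (H x) := Real.log_le_log hx2.1 (hFH x)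
    calc a < x⁻¹ * Real.log (F x) := hx1
      _ ≤ x⁻¹ * Real.log (H x) := mul_le_mul_of_nonneg_left hlog (inv_pos.2 hx0).le
  · intro b hb
    set ε : ℝ := min (b + α) α with hεdef
    have hε0 : 0 < ε := lt_min (by linarith) hα
    have hεα : ε ≤ α := min_le_right _ _
    have hεb : -α + ε ≤ b := by
      have hm := min_le_left (b + α) α
      rw [hεdef]
      linarith [hm]
    filter_upwards [upper ε hε0 hεα] with x hx
    calc x⁻¹ * Real.log (H x) < -α + ε := hx
      _ ≤ b := hεb
end

section
/- Let X and Y be non-negative independent random variables with lim_{x→∞} x⁻¹ log P(X > x) = -a and lim_{x→∞} x⁻¹ log P(Y > x) = -b for some a, b > 0. Then lim_{x→∞} x⁻¹ log P(X + Y > x) = -min{a, b}. -/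
open MeasureTheory ProbabilityTheory Filter

lemma tail_bound' {Ω : Type*} [MeasurableSpace Ω] (μ : Measure Ω) [IsProbabilityMeasure μ]
    (Z : Ω → ℝ) (a : ℝ)
    (hd : Tendsto (fun x : ℝ => x⁻¹ * Real.log (μ {ω | x < Z ω}).toReal) atTop (nhds (-a)))
    (c : ℝ) (hc : 0 < c) (hca : c < a) :
    ∃ C : ℝ, 1 ≤ C ∧ ∀ t : ℝ, (μ {ω | t < Z ω}).toReal ≤ C * Real.exp (-(c * t)) := by
  have hev : ∀ᶠ x in atTop, x⁻¹ * Real.log (μ {ω | x < Z ω}).toReal < -c :=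
    hd.eventually (eventually_lt_nhds (by linarith))
  obtain ⟨M₀, hM₀⟩ := eventually_atTop.1 hev
  set M := max M₀ 1 with hMdef
  have hM1 : (1:ℝ) ≤ M := le_max_right _ _
  refine ⟨Real.exp (c * M), Real.one_le_exp (by positivity), fun t => ?_⟩
  rcases le_or_gt M t with ht | ht
  · have htpos : 0 < t := lt_of_lt_of_le (by linarith) ht
    have h1 : t⁻¹ * Real.log (μ {ω | t < Z ω}).toReal < -c :=
      hM₀ t (le_trans (le_max_left _ _) ht)
    have h2 : Real.log (μ {ω | t < Z ω}).toReal < -(c * t) := by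
      have := mul_lt_mul_of_pos_left h1 htpos
      rw [mul_inv_cancel_left₀ (ne_of_gt htpos)] at this
      linarith [this]
    rcases eq_or_lt_of_le (ENNReal.toReal_nonneg :
        (0:ℝ) ≤ (μ {ω | t < Z ω}).toReal) with h0 | h0
    · rw [← h0]; positivity
    · have : (μ {ω | t < Z ω}).toReal ≤ Real.exp (-(c * t)) := by
        rw [← Real.exp_log h0]
        exact (Real.exp_le_exp.2 h2.le)
      calc (μ {ω | t < Z ω}).toReal ≤ Real.exp (-(c * t)) := this
        _ ≤ Real.exp (c * M) * Real.exp (-(c * t)) := by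
            nlinarith [Real.exp_pos (-(c*t)), Real.one_le_exp (show (0:ℝ) ≤ c * M by positivity)]
  · have h1 : (μ {ω | t < Z ω}).toReal ≤ 1 := by
      have := prob_le_one (μ := μ) (s := {ω | t < Z ω})
      simpa using ENNReal.toReal_mono ENNReal.one_ne_top this
    calc (μ {ω | t < Z ω}).toReal ≤ 1 := h1
      _ ≤ Real.exp (c * M) * Real.exp (-(c * t)) := by
          rw [← Real.exp_add]
          refine Real.one_le_exp ?_
          nlinarith

set_option maxHeartbeats 1000000 in
lemma decay_aux {Ω : Type*} [MeasurableSpace Ω] (μ : Measure Ω)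
    [IsProbabilityMeasure μ] (X Y : Ω → ℝ) (hX : Measurable X) (hY : Measurable Y)
    (hX0 : ∀ ω, 0 ≤ X ω) (hY0 : ∀ ω, 0 ≤ Y ω)
    (hindep : IndepFun X Y μ) (a b : ℝ) (ha : 0 < a) (hb : 0 < b) (hab : a ≤ b)
    (hdX : Tendsto (fun x : ℝ => x⁻¹ * Real.log (μ {ω | x < X ω}).toReal)
      atTop (nhds (-a)))
    (hdY : Tendsto (fun x : ℝ => x⁻¹ * Real.log (μ {ω | x < Y ω}).toReal)
      atTop (nhds (-b))) :
    Tendsto (fun x : ℝ => x⁻¹ * Real.log (μ {ω | x < X ω + Y ω}).toReal)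
      atTop (nhds (-a)) := by
  -- eventual positivity of the X-tail, hence of the sum tail, and monotone comparison
  have h1 : ∀ᶠ x : ℝ in atTop, x⁻¹ * Real.log (μ {ω | x < X ω}).toReal < -(a/2) :=
    hdX.eventually (eventually_lt_nhds (by linarith))
  have hbase : ∀ᶠ x : ℝ in atTop, 1 ≤ x ∧ 0 < (μ {ω | x < X ω}).toReal ∧
      0 < (μ {ω | x < X ω + Y ω}).toReal ∧
      x⁻¹ * Real.log (μ {ω | x < X ω}).toReal ≤
        x⁻¹ * Real.log (μ {ω | x < X ω + Y ω}).toReal := by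
    filter_upwards [h1, eventually_ge_atTop (1:ℝ)] with x hx hx1
    have hxpos : (0:ℝ) < x := by linarith
    have hPX : 0 < (μ {ω | x < X ω}).toReal := by
      rcases eq_or_lt_of_le (ENNReal.toReal_nonneg :
          (0:ℝ) ≤ (μ {ω | x < X ω}).toReal) with h0 | h0
      · exfalso
        rw [← h0, Real.log_zero, mul_zero] at hx
        linarith
      · exact h0
    have hsub : {ω | x < X ω} ⊆ {ω | x < X ω + Y ω} := fun ω h =>
      lt_of_lt_of_le h (le_add_of_nonneg_right (hY0 ω))
    have hle : (μ {ω | x < X ω}).toReal ≤ (μ {ω | x < X ω + Y ω}).toReal :=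
      ENNReal.toReal_mono (measure_ne_top μ _) (measure_mono hsub)
    refine ⟨hx1, hPX, lt_of_lt_of_le hPX hle, ?_⟩
    exact mul_le_mul_of_nonneg_left (Real.log_le_log hPX hle) (by positivity)
  rw [tendsto_order]
  constructor
  · -- lower bound
    intro L hL
    filter_upwards [hbase, hdX.eventually (eventually_gt_nhds hL)] with x hx hgx
    exact lt_of_lt_of_le hgx hx.2.2.2
  · -- upper bound
    intro L hL
    set ε := L + a with hεdef
    have hε : 0 < ε := by simp [hεdef]; linarith
    set ε₁ := min (ε/4) (a/2) with hε₁def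
    have hε₁pos : 0 < ε₁ := lt_min (by linarith) (by linarith)
    have hε₁a : ε₁ ≤ a/2 := min_le_right _ _
    have hε₁e : ε₁ ≤ ε/4 := min_le_left _ _
    set c := a - ε₁ with hcdef
    have hc : 0 < c := by simp [hcdef]; linarith
    have hca : c < a := by simp [hcdef]; linarith
    have hcb : c < b := lt_of_lt_of_le hca hab
    have hcle : c ≤ a := hca.le
    obtain ⟨CX, hCX1, hCX⟩ := tail_bound' μ X a hdX c hc hca
    obtain ⟨CY, hCY1, hCY⟩ := tail_bound' μ Y b hdY c hc hcb
    obtain ⟨n, hN2, hN8⟩ : ∃ n : ℕ, (2:ℝ) ≤ (n:ℝ) ∧ 8*a/ε ≤ (n:ℝ) := by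
      refine ⟨max 2 ⌈8*a/ε⌉₊, ?_, ?_⟩
      · have h2 : (2:ℕ) ≤ max 2 ⌈8*a/ε⌉₊ := le_max_left _ _
        exact_mod_cast h2
      · have h2 : ⌈8*a/ε⌉₊ ≤ max 2 ⌈8*a/ε⌉₊ := le_max_right _ _
        exact le_trans (Nat.le_ceil _) (by exact_mod_cast h2)
    set N := (n:ℝ) with hNdef
    have hNpos : (0:ℝ) < N := by linarith
    have h8a : 8*a ≤ N*ε := by
      rw [div_le_iff₀ hε] at hN8; linarith
    set K := (N+1) * (CX * CY) with hKdef
    have hK : 0 < K := by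
      have : (0:ℝ) < CX * CY := by nlinarith
      nlinarith
    -- the key pointwise bound
    have key : ∀ x : ℝ, 1 ≤ x →
        (μ {ω | x < X ω + Y ω}).toReal ≤ K * Real.exp (-(c * ((N-2) * (x/N)))) := by
      intro x hx1
      have hxpos : (0:ℝ) < x := by linarith
      set δ := x / N with hδdef
      have hδpos : 0 < δ := by positivity
      have hNx : N * δ = x := by
        rw [hδdef, mul_comm]
        exact div_mul_cancel₀ x (ne_of_gt hNpos)
      have hcover : {ω | x < X ω + Y ω} ⊆
          ⋃ k ∈ Finset.range (n+1),
            (X ⁻¹' Set.Ioi (((k:ℝ)-1)*δ) ∩ Y ⁻¹' Set.Ioi ((N-1-(k:ℝ))*δ)) := by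
        intro ω hω
        simp only [Set.mem_setOf_eq] at hω
        by_cases hcase : n ≤ ⌊X ω / δ⌋₊
        · refine Set.mem_biUnion (Finset.self_mem_range_succ n) ?_
          have hfl : (n:ℝ) ≤ X ω / δ :=
            (Nat.le_floor_iff (div_nonneg (hX0 ω) hδpos.le)).mp hcase
          have hXge : N * δ ≤ X ω := by
            rw [hNdef]
            exact (le_div_iff₀ hδpos).mp hfl
          constructor
          · show X ω ∈ Set.Ioi (((n:ℝ)-1)*δ)
            simp only [Set.mem_Ioi]
            rw [← hNdef]
            nlinarith
          · show Y ω ∈ Set.Ioi ((N-1-(n:ℝ))*δ)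
            simp only [Set.mem_Ioi]
            rw [← hNdef]
            nlinarith [hY0 ω]
        · push_neg at hcase
          set k := ⌊X ω / δ⌋₊ with hkdef
          refine Set.mem_biUnion (Finset.mem_range.2 (Nat.lt_succ_of_lt hcase)) ?_
          have hk1 : (k:ℝ)*δ ≤ X ω := by
            have h' : (k:ℝ) ≤ X ω / δ := Nat.floor_le (div_nonneg (hX0 ω) hδpos.le)
            exact (le_div_iff₀ hδpos).mp h'
          have hk2 : X ω < ((k:ℝ)+1)*δ := by
            have h' : X ω / δ < (k:ℝ)+1 := by
              rw [hkdef]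
              exact Nat.lt_floor_add_one _
            exact (div_lt_iff₀ hδpos).mp h'
          constructor
          · show X ω ∈ Set.Ioi (((k:ℝ)-1)*δ)
            simp only [Set.mem_Ioi]
            nlinarith
          · show Y ω ∈ Set.Ioi ((N-1-(k:ℝ))*δ)
            simp only [Set.mem_Ioi]
            nlinarith
      have hstep1 : μ {ω | x < X ω + Y ω} ≤
          ∑ k ∈ Finset.range (n+1),
            μ (X ⁻¹' Set.Ioi (((k:ℝ)-1)*δ)) * μ (Y ⁻¹' Set.Ioi ((N-1-(k:ℝ))*δ)) := by
        refine le_trans (measure_mono hcover) ?_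
        refine le_trans (measure_biUnion_finset_le _ _) ?_
        refine Finset.sum_le_sum fun k _ => ?_
        rw [hindep.measure_inter_preimage_eq_mul _ _ measurableSet_Ioi measurableSet_Ioi]
      have hne : ∀ k ∈ Finset.range (n+1),
          μ (X ⁻¹' Set.Ioi (((k:ℝ)-1)*δ)) * μ (Y ⁻¹' Set.Ioi ((N-1-(k:ℝ))*δ)) ≠ ⊤ :=
        fun k _ => ENNReal.mul_ne_top (measure_ne_top μ _) (measure_ne_top μ _)
      have hsumne : (∑ k ∈ Finset.range (n+1),
          μ (X ⁻¹' Set.Ioi (((k:ℝ)-1)*δ)) * μ (Y ⁻¹' Set.Ioi ((N-1-(k:ℝ))*δ))) ≠ ⊤ := by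
        exact (ENNReal.sum_lt_top.mpr fun k hk => lt_top_iff_ne_top.mpr (hne k hk)).ne
      have hstep2 : (μ {ω | x < X ω + Y ω}).toReal ≤
          ∑ k ∈ Finset.range (n+1),
            (μ (X ⁻¹' Set.Ioi (((k:ℝ)-1)*δ))).toReal *
              (μ (Y ⁻¹' Set.Ioi ((N-1-(k:ℝ))*δ))).toReal := by
        calc (μ {ω | x < X ω + Y ω}).toReal
            ≤ (∑ k ∈ Finset.range (n+1),
              μ (X ⁻¹' Set.Ioi (((k:ℝ)-1)*δ)) * μ (Y ⁻¹' Set.Ioi ((N-1-(k:ℝ))*δ))).toReal :=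
              ENNReal.toReal_mono hsumne hstep1
          _ = ∑ k ∈ Finset.range (n+1),
              (μ (X ⁻¹' Set.Ioi (((k:ℝ)-1)*δ)) * μ (Y ⁻¹' Set.Ioi ((N-1-(k:ℝ))*δ))).toReal :=
              ENNReal.toReal_sum hne
          _ = _ := Finset.sum_congr rfl fun k _ => ENNReal.toReal_mul
      have hterm : ∀ k ∈ Finset.range (n+1),
          (μ (X ⁻¹' Set.Ioi (((k:ℝ)-1)*δ))).toReal *
            (μ (Y ⁻¹' Set.Ioi ((N-1-(k:ℝ))*δ))).toReal ≤
          (CX * CY) * Real.exp (-(c * ((N-2) * δ))) := by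
        intro k _
        have hA : (μ (X ⁻¹' Set.Ioi (((k:ℝ)-1)*δ))).toReal ≤
            CX * Real.exp (-(c * (((k:ℝ)-1)*δ))) := hCX _
        have hB : (μ (Y ⁻¹' Set.Ioi ((N-1-(k:ℝ))*δ))).toReal ≤
            CY * Real.exp (-(c * ((N-1-(k:ℝ))*δ))) := hCY _
        have hmul : (μ (X ⁻¹' Set.Ioi (((k:ℝ)-1)*δ))).toReal *
            (μ (Y ⁻¹' Set.Ioi ((N-1-(k:ℝ))*δ))).toReal ≤
            (CX * Real.exp (-(c * (((k:ℝ)-1)*δ)))) *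
              (CY * Real.exp (-(c * ((N-1-(k:ℝ))*δ)))) :=
          mul_le_mul hA hB ENNReal.toReal_nonneg (by positivity)
        refine le_trans hmul (le_of_eq ?_)
        rw [mul_mul_mul_comm, ← Real.exp_add]
        congr 1
        ring
      have hsum3 : (∑ k ∈ Finset.range (n+1),
          (μ (X ⁻¹' Set.Ioi (((k:ℝ)-1)*δ))).toReal *
            (μ (Y ⁻¹' Set.Ioi ((N-1-(k:ℝ))*δ))).toReal) ≤
          K * Real.exp (-(c * ((N-2) * δ))) := by
        calc _ ≤ ∑ _k ∈ Finset.range (n+1), (CX * CY) * Real.exp (-(c * ((N-2) * δ))) :=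
              Finset.sum_le_sum hterm
          _ = ((n+1 : ℕ) : ℝ) * ((CX * CY) * Real.exp (-(c * ((N-2) * δ)))) := by
              rw [Finset.sum_const, Finset.card_range, nsmul_eq_mul]
          _ = K * Real.exp (-(c * ((N-2) * δ))) := by
              rw [hKdef]; push_cast; rw [← hNdef]; ring
      exact le_trans hstep2 hsum3
    -- conclude
    have hlogK : Tendsto (fun x : ℝ => x⁻¹ * Real.log K) atTop (nhds 0) := by
      simpa using tendsto_inv_atTop_zero.mul_const (Real.log K)
    have hevK : ∀ᶠ x : ℝ in atTop, x⁻¹ * Real.log K < ε/2 :=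
      hlogK.eventually (eventually_lt_nhds (by linarith))
    filter_upwards [hbase, hevK] with x hx hxK
    obtain ⟨hx1, _, hPpos, _⟩ := hx
    have hxpos : (0:ℝ) < x := by linarith
    have hlog : Real.log (μ {ω | x < X ω + Y ω}).toReal ≤
        Real.log K + (-(c * ((N-2) * (x/N)))) := by
      calc Real.log (μ {ω | x < X ω + Y ω}).toReal
          ≤ Real.log (K * Real.exp (-(c * ((N-2) * (x/N))))) :=
            Real.log_le_log hPpos (key x hx1)
        _ = Real.log K + (-(c * ((N-2) * (x/N)))) := by
            rw [Real.log_mul (ne_of_gt hK) (Real.exp_ne_zero _), Real.log_exp]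
    have hf : x⁻¹ * Real.log (μ {ω | x < X ω + Y ω}).toReal ≤
        x⁻¹ * Real.log K + (-(c * (N-2) / N)) := by
      have := mul_le_mul_of_nonneg_left hlog (show (0:ℝ) ≤ x⁻¹ by positivity)
      rw [mul_add] at this
      have heq : x⁻¹ * (-(c * ((N-2) * (x/N)))) = -(c * (N-2) / N) := by
        field_simp
      rw [heq] at this
      exact this
    have hfrac : a - ε/2 ≤ c * (N-2) / N := by
      rw [le_div_iff₀ hNpos]
      have hcεa : c = a - ε₁ := hcdef
      nlinarith
    calc x⁻¹ * Real.log (μ {ω | x < X ω + Y ω}).toReal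
        ≤ x⁻¹ * Real.log K + (-(c * (N-2) / N)) := hf
      _ < ε/2 + (-(a - ε/2)) := by linarith
      _ = L := by rw [hεdef]; ring

theorem decay_rate_sum_min {Ω : Type*} [MeasurableSpace Ω] (μ : Measure Ω)
    [IsProbabilityMeasure μ] (X Y : Ω → ℝ) (hX : Measurable X) (hY : Measurable Y)
    (hX0 : ∀ ω, 0 ≤ X ω) (hY0 : ∀ ω, 0 ≤ Y ω)
    (hindep : IndepFun X Y μ) (a b : ℝ) (ha : 0 < a) (hb : 0 < b)
    (hdX : Tendsto (fun x : ℝ => x⁻¹ * Real.log (μ {ω | x < X ω}).toReal)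
      atTop (nhds (-a)))
    (hdY : Tendsto (fun x : ℝ => x⁻¹ * Real.log (μ {ω | x < Y ω}).toReal)
      atTop (nhds (-b))) :
    Tendsto (fun x : ℝ => x⁻¹ * Real.log (μ {ω | x < X ω + Y ω}).toReal)
      atTop (nhds (-(min a b))) := by
  rcases le_total a b with hab | hab
  · rw [min_eq_left hab]
    exact decay_aux μ X Y hX hY hX0 hY0 hindep a b ha hb hab hdX hdY
  · rw [min_eq_right hab]
    have h := decay_aux μ Y X hY hX hY0 hX0 hindep.symm b a hb ha hab hdY hdX
    have hset : (fun x : ℝ => x⁻¹ * Real.log (μ {ω | x < Y ω + X ω}).toReal) =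
        (fun x : ℝ => x⁻¹ * Real.log (μ {ω | x < X ω + Y ω}).toReal) := by
      funext x
      rw [show {ω | x < Y ω + X ω} = {ω | x < X ω + Y ω} from by ext ω; simp [add_comm]]
    rwa [hset] at h
end

section
/- For any fixed n ∈ ℕ, n ≥ 1, and non-negative independent random variables X and Y, the inequality P(X + Y > x) ≤ Σ_{i=0}^{n-1} P(X ≥ ix/n) · P(Y ≥ (n-i-1)x/n) holds for all x ≥ 0. -/
/-!
If `x < X + Y` with `X, Y ≥ 0`, let `i < n` be the largest index with `i x / n ≤ X`. Either
`i = n - 1`, or `X < (i + 1) x / n` and then `Y > x - X > (n - i - 1) x / n`. So the event is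
covered by the `n` rectangles `{X ≥ i x / n} ∩ {Y ≥ (n - i - 1) x / n}`; a union bound and
independence give the sum of products.
-/

open MeasureTheory ProbabilityTheory

lemma exists_lt_mul_div_le_and_sub_mul_div_le {n : ℕ} (hn : 1 ≤ n) {x a b : ℝ} (ha : 0 ≤ a)
    (hb : 0 ≤ b) (hab : x ≤ a + b) :
    ∃ i < n, (i : ℝ) * x / n ≤ a ∧ ((n - i - 1 : ℕ) : ℝ) * x / n ≤ b := by
  classical
  set P : ℕ → Prop := fun k => (k : ℝ) * x / n ≤ a
  set i := Nat.findGreatest P (n - 1)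
  have hi_le : i ≤ n - 1 := Nat.findGreatest_le _
  refine ⟨i, by omega, Nat.findGreatest_spec (P := P) (Nat.zero_le _) (by simpa [P] using ha), ?_⟩
  rcases hi_le.eq_or_lt with hi | hi
  · simp [hi, show n - (n - 1) - 1 = 0 by omega, hb]
  · have hnext : a < ((i + 1 : ℕ) : ℝ) * x / n :=
      not_le.mp (Nat.findGreatest_is_greatest (Nat.lt_succ_self i) (by omega))
    have hsplit : ((n - i - 1 : ℕ) : ℝ) * x / n = x - ((i + 1 : ℕ) : ℝ) * x / n := by
      have hn0 : (n : ℝ) ≠ 0 := by exact_mod_cast (by omega : n ≠ 0)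
      rw [show n - i - 1 = n - (i + 1) by omega, Nat.cast_sub (by omega : i + 1 ≤ n)]
      field_simp
    linarith

lemma ProbabilityTheory.IndepFun.measure_le_sum_mul_of_subset_biUnion {Ω α β ι : Type*}
    [MeasurableSpace Ω] [MeasurableSpace α] [MeasurableSpace β] {μ : Measure Ω} {X : Ω → α}
    {Y : Ω → β} (hindep : IndepFun X Y μ) {A : ι → Set α} {B : ι → Set β}
    (hA : ∀ i, MeasurableSet (A i)) (hB : ∀ i, MeasurableSet (B i)) {s : Finset ι} {S : Set Ω}
    (hS : S ⊆ ⋃ i ∈ s, X ⁻¹' A i ∩ Y ⁻¹' B i) :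
    μ S ≤ ∑ i ∈ s, μ (X ⁻¹' A i) * μ (Y ⁻¹' B i) :=
  calc μ S ≤ μ (⋃ i ∈ s, X ⁻¹' A i ∩ Y ⁻¹' B i) := measure_mono hS
    _ ≤ ∑ i ∈ s, μ (X ⁻¹' A i ∩ Y ⁻¹' B i) := measure_biUnion_finset_le _ _
    _ = ∑ i ∈ s, μ (X ⁻¹' A i) * μ (Y ⁻¹' B i) :=
      Finset.sum_congr rfl fun i _ => hindep.measure_inter_preimage_eq_mul _ _ (hA i) (hB i)

theorem sum_tail_bound_general {Ω : Type*} [MeasurableSpace Ω] (μ : Measure Ω)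
    (X Y : Ω → ℝ)
    (hX0 : ∀ ω, 0 ≤ X ω) (hY0 : ∀ ω, 0 ≤ Y ω)
    (hindep : IndepFun X Y μ) (n : ℕ) (hn : 1 ≤ n) (x : ℝ) :
    μ {ω | x < X ω + Y ω} ≤
      ∑ i ∈ Finset.range n,
        μ {ω | (i : ℝ) * x / n ≤ X ω} * μ {ω | ((n - i - 1 : ℕ) : ℝ) * x / n ≤ Y ω} := by
  refine hindep.measure_le_sum_mul_of_subset_biUnion (A := fun i : ℕ => Set.Ici ((i : ℝ) * x / n))
    (B := fun i : ℕ => Set.Ici (((n - i - 1 : ℕ) : ℝ) * x / n))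
    (fun _ => measurableSet_Ici) (fun _ => measurableSet_Ici) fun ω hω => ?_
  obtain ⟨i, hin, hXi, hYi⟩ :=
    exists_lt_mul_div_le_and_sub_mul_div_le hn (hX0 ω) (hY0 ω) (le_of_lt hω)
  exact Set.mem_biUnion (Finset.mem_range.mpr hin) ⟨hXi, hYi⟩

theorem sum_tail_bound {Ω : Type*} [MeasurableSpace Ω] (μ : Measure Ω)
    [IsProbabilityMeasure μ] (X Y : Ω → ℝ) (hX : Measurable X) (hY : Measurable Y)
    (hX0 : ∀ ω, 0 ≤ X ω) (hY0 : ∀ ω, 0 ≤ Y ω)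
    (hindep : IndepFun X Y μ) (n : ℕ) (hn : 1 ≤ n) (x : ℝ) (hx : 0 ≤ x) :
    μ {ω | x < X ω + Y ω} ≤
      ∑ i ∈ Finset.range n,
        μ {ω | (i : ℝ) * x / n ≤ X ω} * μ {ω | ((n - i - 1 : ℕ) : ℝ) * x / n ≤ Y ω} :=
  sum_tail_bound_general μ X Y hX0 hY0 hindep n hn x
end

section
/- Let B be a non-negative random variable with finite exponential moment, endpoint x_F = inf{u ≥ 0 : P(B ≤ u) = 1} possibly infinite, and λ > 0 with λE[B] < 1. Define c(τ) = sup_θ { θ - λ(E[e^{θ(B∧τ)}] - 1) }. Then c(τ) → c(x_F) = sup_θ { θ - λ(E[e^{θB}] - 1) } as τ → x_F. -/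
open MeasureTheory Filter
open Real Set

section aux
set_option linter.unusedSectionVars false
variable {Ω : Type*} [MeasurableSpace Ω] {μ : Measure Ω} [IsProbabilityMeasure μ]
  {B : Ω → ℝ}

lemma tdr_meas_trunc (hB : Measurable B) (θ τ : ℝ) :
    AEStronglyMeasurable (fun ω => Real.exp (θ * min (B ω) τ)) μ :=
  (((hB.min measurable_const).const_mul θ).exp).aestronglyMeasurable

lemma tdr_int_trunc (hB : Measurable B) (hB0 : ∀ ω, 0 ≤ B ω) (θ τ : ℝ) :
    Integrable (fun ω => Real.exp (θ * min (B ω) τ)) μ := by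
  refine Integrable.mono' (integrable_const (Real.exp (|θ| * |τ|))) (tdr_meas_trunc hB θ τ) ?_
  filter_upwards with ω
  rw [Real.norm_eq_abs, abs_of_pos (Real.exp_pos _)]
  apply Real.exp_le_exp.2
  have h1 : |min (B ω) τ| ≤ |τ| := by
    rcases le_total (B ω) τ with h | h
    · rw [min_eq_left h, abs_le]
      constructor
      · have : (0:ℝ) ≤ |τ| := abs_nonneg τ
        linarith [hB0 ω]
      · exact h.trans (le_abs_self τ)
    · rw [min_eq_right h]
  calc θ * min (B ω) τ ≤ |θ * min (B ω) τ| := le_abs_self _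
    _ = |θ| * |min (B ω) τ| := abs_mul _ _
    _ ≤ |θ| * |τ| := mul_le_mul_of_nonneg_left h1 (abs_nonneg θ)

lemma tdr_int_B (hB : Measurable B) (hB0 : ∀ ω, 0 ≤ B ω) {γ : ℝ} (hγ : 0 < γ)
    (hexp : Integrable (fun ω => Real.exp (γ * B ω)) μ) : Integrable B μ := by
  refine Integrable.mono' (hexp.smul (γ⁻¹)) hB.aestronglyMeasurable ?_
  filter_upwards with ω
  rw [Real.norm_eq_abs, abs_of_nonneg (hB0 ω)]
  simp only [smul_eq_mul, Pi.smul_apply]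
  rw [← mul_le_mul_iff_right₀ hγ]
  calc γ * B ω ≤ Real.exp (γ * B ω) := by
        have := Real.add_one_le_exp (γ * B ω)
        nlinarith [hB0 ω, hγ.le]
    _ = γ * (γ⁻¹ * Real.exp (γ * B ω)) := by field_simp
  
lemma tdr_int_exp_mono (hB : Measurable B) (hB0 : ∀ ω, 0 ≤ B ω) {θ θ' : ℝ} (h : θ' ≤ θ)
    (hexp : Integrable (fun ω => Real.exp (θ * B ω)) μ) :
    Integrable (fun ω => Real.exp (θ' * B ω)) μ := by
  refine Integrable.mono' (hexp.add (integrable_const 1)) ((hB.const_mul θ').exp).aestronglyMeasurable ?_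
  filter_upwards with ω
  rw [Real.norm_eq_abs, abs_of_pos (Real.exp_pos _)]
  rcases le_total θ' 0 with h' | h'
  · have : Real.exp (θ' * B ω) ≤ 1 := Real.exp_le_one_iff.2 (mul_nonpos_of_nonpos_of_nonneg h' (hB0 ω))
    have := (Real.exp_pos (θ * B ω)).le
    simp only [Pi.add_apply]
    linarith
  · have : Real.exp (θ' * B ω) ≤ Real.exp (θ * B ω) := by
      apply Real.exp_le_exp.2; exact mul_le_mul_of_nonneg_right h (hB0 ω)
    have := Real.exp_pos (θ * B ω)
    simp only [Pi.add_apply]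
    linarith

end aux

section aux2
set_option linter.unusedSectionVars false
variable {Ω : Type*} [MeasurableSpace Ω] {μ : Measure Ω} [IsProbabilityMeasure μ]
  {B : Ω → ℝ}

lemma tdr_exp_lower (hB : Measurable B) {t : ℝ} {θ : ℝ} (hθ : 0 ≤ θ) {f : Ω → ℝ}
    (hf : Integrable (fun ω => Real.exp (θ * f ω)) μ) (hft : ∀ ω, t < B ω → t ≤ f ω) :
    Real.exp (θ * t) * (μ {ω | t < B ω}).toReal ≤ ∫ ω, Real.exp (θ * f ω) ∂μ := by
  have hs : MeasurableSet {ω | t < B ω} := measurableSet_lt measurable_const hB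
  calc Real.exp (θ * t) * (μ {ω | t < B ω}).toReal
      ≤ ∫ ω in {ω | t < B ω}, Real.exp (θ * f ω) ∂μ := by
        refine setIntegral_ge_of_const_le_real hs (measure_ne_top μ _) (fun ω hω => ?_) hf.integrableOn
        exact Real.exp_le_exp.2 (mul_le_mul_of_nonneg_left (hft ω hω) hθ)
    _ ≤ ∫ ω, Real.exp (θ * f ω) ∂μ :=
        setIntegral_le_integral hf (Filter.Eventually.of_forall fun ω => (Real.exp_pos _).le)

-- elementary: exp x ≥ x^2/4 for x ≥ 0
lemma tdr_exp_sq {x : ℝ} (hx : 0 ≤ x) : x^2 / 4 ≤ Real.exp x := by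
  have h := Real.add_one_le_exp (x / 2)
  have h2 : Real.exp (x/2) ^ 2 = Real.exp x := by
    rw [sq, ← Real.exp_add]; ring_nf
  nlinarith [Real.exp_pos (x/2)]

-- elementary: for 0 ≤ θ ≤ M, 0 ≤ b ≤ a : e^{θa} - e^{θb} ≤ e^{Ma} - e^{Mb}
lemma tdr_exp_diff_mono {θ M a b : ℝ} (hθ : 0 ≤ θ) (hM : θ ≤ M) (hb : 0 ≤ b) (hab : b ≤ a) :
    Real.exp (θ * a) - Real.exp (θ * b) ≤ Real.exp (M * a) - Real.exp (M * b) := by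
  have e1 : Real.exp (θ * a) - Real.exp (θ * b) = Real.exp (θ * b) * (Real.exp (θ * (a - b)) - 1) := by
    rw [mul_sub θ a b, Real.exp_sub]
    field_simp
  have e2 : Real.exp (M * a) - Real.exp (M * b) = Real.exp (M * b) * (Real.exp (M * (a - b)) - 1) := by
    rw [mul_sub M a b, Real.exp_sub]
    field_simp
  rw [e1, e2]
  apply mul_le_mul
  · exact Real.exp_le_exp.2 (mul_le_mul_of_nonneg_right hM hb)
  · have : Real.exp (θ * (a-b)) ≤ Real.exp (M * (a-b)) :=
      Real.exp_le_exp.2 (mul_le_mul_of_nonneg_right hM (by linarith))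
    linarith
  · have : 1 ≤ Real.exp (θ * (a-b)) := Real.one_le_exp (mul_nonneg hθ (by linarith))
    linarith
  · exact (Real.exp_pos _).le

end aux2

section aux3
set_option linter.unusedSectionVars false
variable {Ω : Type*} [MeasurableSpace Ω] {μ : Measure Ω} [IsProbabilityMeasure μ]
  {B : Ω → ℝ} {lam t θ : ℝ} {f : Ω → ℝ}

-- U1
lemma tdr_U1 (hlam : 0 < lam) (hBint : Integrable B μ) (hρ : lam * ∫ ω, B ω ∂μ < 1)
    (hθ : θ ≤ 0) (hfi : Integrable f μ) (hfm : Integrable (fun ω => Real.exp (θ * f ω)) μ)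
    (hf0 : ∀ ω, 0 ≤ f ω) (hfB : ∀ ω, f ω ≤ B ω) :
    θ - lam * ((∫ ω, Real.exp (θ * f ω) ∂μ) - 1) ≤ 0 := by
  have h1 : 1 + θ * ∫ ω, f ω ∂μ ≤ ∫ ω, Real.exp (θ * f ω) ∂μ := by
    have : ∫ ω, (1 + θ * f ω) ∂μ ≤ ∫ ω, Real.exp (θ * f ω) ∂μ := by
      refine integral_mono ((integrable_const 1).add (hfi.const_mul θ)) hfm (fun ω => ?_)
      have := Real.add_one_le_exp (θ * f ω)
      simp only [Pi.add_apply]; linarith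
    rwa [integral_add (integrable_const 1) (hfi.const_mul θ), integral_const,
      integral_const_mul, probReal_univ, smul_eq_mul, mul_one] at this
  have h2 : 0 ≤ ∫ ω, f ω ∂μ := integral_nonneg hf0
  have h3 : ∫ ω, f ω ∂μ ≤ ∫ ω, B ω ∂μ := integral_mono hfi hBint hfB
  have e1 : lam * (θ * ∫ ω, f ω ∂μ) ≤ lam * ((∫ ω, Real.exp (θ * f ω) ∂μ) - 1) :=
    mul_le_mul_of_nonneg_left (by linarith) hlam.le
  have e2 : (0:ℝ) ≤ 1 - lam * ∫ ω, f ω ∂μ := by nlinarith [mul_le_mul_of_nonneg_left h3 hlam.le]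
  have e3 : θ * (1 - lam * ∫ ω, f ω ∂μ) ≤ 0 := mul_nonpos_of_nonpos_of_nonneg hθ e2
  nlinarith

-- U2
lemma tdr_U2 (hB : Measurable B) (hlam : 0 < lam)
    (hθ : 0 ≤ θ) (hfm : Integrable (fun ω => Real.exp (θ * f ω)) μ)
    (hft : ∀ ω, t < B ω → t ≤ f ω) (ht : 0 < t) :
    θ - lam * ((∫ ω, Real.exp (θ * f ω) ∂μ) - 1)
      ≤ θ + lam - (lam * (μ {ω | t < B ω}).toReal * t^2 / 4) * θ^2 := by
  have h1 := tdr_exp_lower hB hθ hfm hft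
  have h2 : (θ*t)^2/4 ≤ Real.exp (θ * t) := tdr_exp_sq (by positivity)
  have hp0 : (0:ℝ) ≤ (μ {ω | t < B ω}).toReal := ENNReal.toReal_nonneg
  nlinarith [mul_le_mul_of_nonneg_right h2 hp0]

lemma tdr_R1 {a : ℝ} (ha : 0 < a) (hlam : 0 < lam) : θ + lam - a * θ^2 ≤ lam + 1/(4*a) := by
  have h4 : θ - a*θ^2 ≤ 1/(4*a) := by
    rw [le_div_iff₀ (by positivity)]
    nlinarith [sq_nonneg (2*a*θ - 1)]
  linarith

lemma tdr_R2 {a : ℝ} (ha : 0 < a) (hlam : 0 < lam) (hθ : max 1 ((1+lam)/a) ≤ θ) :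
    θ + lam - a * θ^2 ≤ 0 := by
  have h1 : (1:ℝ) ≤ θ := le_trans (le_max_left _ _) hθ
  have h2 : (1+lam)/a ≤ θ := le_trans (le_max_right _ _) hθ
  rw [div_le_iff₀ ha] at h2
  nlinarith

end aux3
section aux4
set_option linter.unusedSectionVars false
set_option maxHeartbeats 1000000
variable {Ω : Type*} [MeasurableSpace Ω] {μ : Measure Ω} [IsProbabilityMeasure μ]
  {B : Ω → ℝ} {lam t θ τ : ℝ} {f : Ω → ℝ}

lemma tdr_int_min (hB : Measurable B) (hB0 : ∀ ω, 0 ≤ B ω) (τ : ℝ) :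
    Integrable (fun ω => min (B ω) τ) μ := by
  refine Integrable.mono' (integrable_const |τ|) ((hB.min measurable_const).aestronglyMeasurable) ?_
  filter_upwards with ω
  rw [Real.norm_eq_abs]
  rcases le_total (B ω) τ with h | h
  · rw [min_eq_left h, abs_le]
    constructor
    · have : (0:ℝ) ≤ |τ| := abs_nonneg τ
      linarith [hB0 ω]
    · exact h.trans (le_abs_self τ)
  · rw [min_eq_right h]

-- the combined upper bound over all θ
lemma tdr_Uall (hB : Measurable B) (hlam : 0 < lam) (hBint : Integrable B μ)
    (hρ : lam * ∫ ω, B ω ∂μ < 1) (ht : 0 < t)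
    (hfi : Integrable f μ) (hfm : Integrable (fun ω => Real.exp (θ * f ω)) μ)
    (hf0 : ∀ ω, 0 ≤ f ω) (hft : ∀ ω, t < B ω → t ≤ f ω) (hfB : ∀ ω, f ω ≤ B ω)
    (hA : 0 < lam * (μ {ω | t < B ω}).toReal * t^2/4) :
    θ - lam * ((∫ ω, Real.exp (θ * f ω) ∂μ) - 1)
      ≤ max 0 (lam + 1/(4*(lam * (μ {ω | t < B ω}).toReal * t^2/4))) := by
  rcases le_total θ 0 with hθ | hθ
  · exact le_trans (tdr_U1 hlam hBint hρ hθ hfi hfm hf0 hfB) (le_max_left _ _)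
  · refine le_trans (le_trans (tdr_U2 hB hlam hθ hfm hft ht) ?_) (le_max_right _ _)
    exact tdr_R1 hA hlam

lemma tdr_UgeM (hB : Measurable B) (hlam : 0 < lam) (ht : 0 < t)
    (hfm : Integrable (fun ω => Real.exp (θ * f ω)) μ)
    (hft : ∀ ω, t < B ω → t ≤ f ω)
    (hA : 0 < lam * (μ {ω | t < B ω}).toReal * t^2/4)
    (hθ : max 1 ((1+lam)/(lam * (μ {ω | t < B ω}).toReal * t^2/4)) ≤ θ) :
    θ - lam * ((∫ ω, Real.exp (θ * f ω) ∂μ) - 1) ≤ 0 := by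
  have hθ0 : (0:ℝ) ≤ θ := le_trans (le_trans zero_le_one (le_max_left _ _)) hθ
  exact le_trans (tdr_U2 hB hlam hθ0 hfm hft ht) (tdr_R2 hA hlam hθ)

lemma tdr_g_zero (lam τ : ℝ) :
    (0:ℝ) - lam * ((∫ ω, Real.exp (0 * min (B ω) τ) ∂μ) - 1) = 0 := by
  simp

lemma tdr_min_props (hB0 : ∀ ω, 0 ≤ B ω) (ht : 0 < t) (hτ : t ≤ τ) :
    (∀ ω, 0 ≤ min (B ω) τ) ∧ (∀ ω, t < B ω → t ≤ min (B ω) τ) ∧ (∀ ω, min (B ω) τ ≤ B ω) :=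
  ⟨fun ω => le_min (hB0 ω) (le_trans ht.le hτ),
   fun ω h => le_min h.le hτ, fun ω => min_le_left _ _⟩

end aux4
section part1
set_option linter.unusedSectionVars false
set_option maxHeartbeats 1000000

lemma tdr_part1 {Ω : Type*} [MeasurableSpace Ω] (μ : MeasureTheory.Measure Ω)
    [MeasureTheory.IsProbabilityMeasure μ] (B : Ω → ℝ) (hB : Measurable B) (hB0 : ∀ ω, 0 ≤ B ω)
    (γ : ℝ) (hγ : 0 < γ) (hexp : MeasureTheory.Integrable (fun ω => Real.exp (γ * B ω)) μ)
    (lam : ℝ) (hlam : 0 < lam) (hρ : lam * ∫ ω, B ω ∂μ < 1)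
    (c : ℝ → ℝ)
    (hc : ∀ τ : ℝ, c τ = sSup (Set.range fun θ : ℝ =>
        θ - lam * ((∫ ω, Real.exp (θ * min (B ω) τ) ∂μ) - 1)))
    (hS : ({u : ℝ | 0 ≤ u ∧ μ {ω | B ω ≤ u} = 1}).Nonempty) :
    Tendsto c (nhdsWithin (sInf {u : ℝ | 0 ≤ u ∧ μ {ω | B ω ≤ u} = 1})
          (Set.Iio (sInf {u : ℝ | 0 ≤ u ∧ μ {ω | B ω ≤ u} = 1})))
        (nhds (c (sInf {u : ℝ | 0 ≤ u ∧ μ {ω | B ω ≤ u} = 1}))) := by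
  set S := {u : ℝ | 0 ≤ u ∧ μ {ω | B ω ≤ u} = 1} with hSdef
  set x := sInf S with hxdef
  have hBint : Integrable B μ := tdr_int_B hB hB0 hγ hexp
  have hx0 : 0 ≤ x := le_csInf hS (fun u hu => hu.1)
  -- notation for the truncated objective
  set g : ℝ → ℝ → ℝ := fun τ θ => θ - lam * ((∫ ω, Real.exp (θ * min (B ω) τ) ∂μ) - 1) with hgdef
  have hgz : ∀ τ, g τ 0 = 0 := fun τ => tdr_g_zero lam τ
  rcases eq_or_lt_of_le hx0 with hx | hx
  · -- degenerate case x = 0 : c is 0 on Iio 0 and at 0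
    have hcz : ∀ τ : ℝ, τ ≤ 0 → c τ = 0 := by
      intro τ hτ
      rw [hc τ]
      apply Real.sSup_of_not_bddAbove
      rintro ⟨b, hb⟩
      have hmem := hb (Set.mem_range_self (f := fun θ : ℝ =>
        θ - lam * ((∫ ω, Real.exp (θ * min (B ω) τ) ∂μ) - 1)) (max b 0 + 1))
      set θ := max b 0 + 1 with hθdef
      have hθ0 : 0 ≤ θ := by positivity
      have hE : (∫ ω, Real.exp (θ * min (B ω) τ) ∂μ) ≤ 1 := by
        calc (∫ ω, Real.exp (θ * min (B ω) τ) ∂μ) ≤ ∫ _ω, (1:ℝ) ∂μ := by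
              refine integral_mono (tdr_int_trunc hB hB0 θ τ) (integrable_const 1) (fun ω => ?_)
              refine Real.exp_le_one_iff.2 (mul_nonpos_of_nonneg_of_nonpos hθ0 ?_)
              exact le_trans (min_le_right _ _) hτ
          _ = 1 := by simp
      have : θ ≤ θ - lam * ((∫ ω, Real.exp (θ * min (B ω) τ) ∂μ) - 1) := by nlinarith
      have hgtb : b < θ := by
        have : b ≤ max b 0 := le_max_left _ _
        linarith
      exact absurd hmem (by simp only [not_le]; linarith)
    have h1 : c x = 0 := hcz x hx.symm.le
    rw [h1]
    refine Tendsto.congr' ?_ (tendsto_const_nhds (α := ℝ) (x := 0))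
    filter_upwards [self_mem_nhdsWithin] with τ (hτ : τ < x)
    exact (hcz τ (by linarith)).symm
  · -- main case x > 0
    set t := x / 2 with htdef
    have ht : 0 < t := by positivity
    have htx : t < x := by linarith
    have hp0 : 0 < (μ {ω | t < B ω}).toReal := by
      refine ENNReal.toReal_pos ?_ (measure_ne_top μ _)
      intro h0
      have hcompl : μ {ω | B ω ≤ t} = 1 := by
        have hms : MeasurableSet {ω | t < B ω} := measurableSet_lt measurable_const hB
        have : {ω | B ω ≤ t} = {ω | t < B ω}ᶜ := by ext ω; simp [not_lt]
        rw [this, MeasureTheory.prob_compl_eq_one_sub hms, h0, tsub_zero]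
      have : x ≤ t := csInf_le ⟨0, fun u hu => hu.1⟩ ⟨ht.le, hcompl⟩
      linarith
    set A := lam * (μ {ω | t < B ω}).toReal * t^2/4 with hAdef
    have hA : 0 < A := by positivity
    set M := max 1 ((1+lam)/A) with hMdef
    have hM0 : (0:ℝ) ≤ M := le_trans zero_le_one (le_max_left _ _)
    set bound0 := max 0 (lam + 1/(4*A)) with hbound0def
    -- generic facts about f = min (B ·) τ for τ ≥ t
    have hkeyint : ∀ (θ τ : ℝ), Integrable (fun ω => Real.exp (θ * min (B ω) τ)) μ :=
      tdr_int_trunc hB hB0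
    have hbdd : ∀ τ : ℝ, t ≤ τ → BddAbove (Set.range (g τ)) := by
      intro τ hτ
      refine ⟨bound0, ?_⟩
      rintro v ⟨θ, rfl⟩
      obtain ⟨hf0, hft, hfB⟩ := tdr_min_props hB0 ht hτ
      exact tdr_Uall hB hlam hBint hρ ht (tdr_int_min hB hB0 τ) (hkeyint θ τ) hf0 hft hfB hA
    -- monotonicity in τ of E for θ ≥ 0
    have hEmono : ∀ (θ : ℝ), 0 ≤ θ → ∀ τ₁ τ₂ : ℝ, τ₁ ≤ τ₂ →
        (∫ ω, Real.exp (θ * min (B ω) τ₁) ∂μ) ≤ ∫ ω, Real.exp (θ * min (B ω) τ₂) ∂μ := by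
      intro θ hθ τ₁ τ₂ h12
      refine integral_mono (hkeyint θ τ₁) (hkeyint θ τ₂) (fun ω => ?_)
      exact Real.exp_le_exp.2 (mul_le_mul_of_nonneg_left (min_le_min le_rfl h12) hθ)
    -- zero is below each sSup
    have hczero : ∀ τ : ℝ, t ≤ τ → 0 ≤ c τ := by
      intro τ hτ
      rw [hc τ]
      have := le_csSup (hbdd τ hτ) (Set.mem_range_self (f := g τ) 0)
      rwa [hgz τ] at this
    -- lower bound : c x ≤ c τ for t ≤ τ ≤ x
    have hlower : ∀ τ : ℝ, t ≤ τ → τ ≤ x → c x ≤ c τ := by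
      intro τ hτ hτx
      rw [hc x]
      refine Real.sSup_le ?_ (hczero τ hτ)
      rintro v ⟨θ, rfl⟩
      rcases le_total θ 0 with hθ | hθ
      · obtain ⟨hf0, hft, hfB⟩ := tdr_min_props hB0 ht (le_of_lt htx)
        refine le_trans (tdr_U1 hlam hBint hρ hθ (tdr_int_min hB hB0 x) (hkeyint θ x) hf0 hfB) ?_
        exact hczero τ hτ
      · have h1 : g x θ ≤ g τ θ := by
          have := hEmono θ hθ τ x hτx
          simp only [hgdef]
          nlinarith
        rw [hc τ]
        exact le_trans h1 (le_csSup (hbdd τ hτ) (Set.mem_range_self θ))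
    -- the uniform modulus
    set D : ℝ → ℝ := fun τ => (∫ ω, Real.exp (M * min (B ω) x) ∂μ)
        - (∫ ω, Real.exp (M * min (B ω) τ) ∂μ) with hDdef
    have hDnonneg : ∀ τ : ℝ, τ ≤ x → 0 ≤ D τ := by
      intro τ hτx
      have := hEmono M hM0 τ x hτx
      simp only [hDdef]; linarith
    -- upper bound : c τ ≤ c x + lam * D τ for t ≤ τ ≤ x
    have hupper : ∀ τ : ℝ, t ≤ τ → τ ≤ x → c τ ≤ c x + lam * D τ := by
      intro τ hτ hτx
      have hcx0 : 0 ≤ c x := hczero x htx.le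
      have hD0 : 0 ≤ D τ := hDnonneg τ hτx
      rw [hc τ]
      refine Real.sSup_le ?_ (by nlinarith)
      rintro v ⟨θ, rfl⟩
      dsimp only
      obtain ⟨hf0, hft, hfB⟩ := tdr_min_props hB0 ht hτ
      rcases le_total θ 0 with hθ | hθ
      · have := tdr_U1 hlam hBint hρ hθ (tdr_int_min hB hB0 τ) (hkeyint θ τ) hf0 hfB
        nlinarith
      · rcases le_total θ M with hθM | hθM
        · -- middle region
          have hdiffle : (∫ ω, Real.exp (θ * min (B ω) x) ∂μ)
              - (∫ ω, Real.exp (θ * min (B ω) τ) ∂μ) ≤ D τ := by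
            have hint1 : Integrable (fun ω => Real.exp (θ * min (B ω) x)
                - Real.exp (θ * min (B ω) τ)) μ := (hkeyint θ x).sub (hkeyint θ τ)
            have hint2 : Integrable (fun ω => Real.exp (M * min (B ω) x)
                - Real.exp (M * min (B ω) τ)) μ := (hkeyint M x).sub (hkeyint M τ)
            have hpt : ∀ ω, Real.exp (θ * min (B ω) x) - Real.exp (θ * min (B ω) τ)
                ≤ Real.exp (M * min (B ω) x) - Real.exp (M * min (B ω) τ) := by
              intro ω
              exact tdr_exp_diff_mono hθ hθM (hf0 ω) (min_le_min le_rfl hτx)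
            have := integral_mono hint1 hint2 hpt
            rwa [integral_sub (hkeyint θ x) (hkeyint θ τ),
              integral_sub (hkeyint M x) (hkeyint M τ)] at this
          have hgx : g x θ ≤ c x := by
            rw [hc x]
            exact le_csSup (hbdd x htx.le) (Set.mem_range_self θ)
          simp only [hgdef] at hgx ⊢
          nlinarith
        · -- large θ
          have := tdr_UgeM hB hlam ht (hkeyint θ τ) hft hA (le_trans (le_of_eq hMdef.symm) hθM)
          nlinarith
    -- convergence of the modulus
    have hEtend : Tendsto (fun τ => ∫ ω, Real.exp (M * min (B ω) τ) ∂μ)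
        (nhdsWithin x (Set.Iio x)) (nhds (∫ ω, Real.exp (M * min (B ω) x) ∂μ)) := by
      refine MeasureTheory.tendsto_integral_filter_of_dominated_convergence
        (fun _ => Real.exp (M * x)) ?_ ?_ (integrable_const _) ?_
      · exact Filter.Eventually.of_forall (fun τ => tdr_meas_trunc hB M τ)
      · filter_upwards [Ioo_mem_nhdsLT hx] with τ hτ
        filter_upwards with ω
        rw [Real.norm_eq_abs, abs_of_pos (Real.exp_pos _)]
        refine Real.exp_le_exp.2 (mul_le_mul_of_nonneg_left ?_ hM0)
        exact le_trans (min_le_right _ _) hτ.2.le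
      · filter_upwards with ω
        have hcont : Continuous (fun τ : ℝ => Real.exp (M * min (B ω) τ)) := by
          exact Real.continuous_exp.comp (continuous_const.mul (continuous_const.min continuous_id))
        exact (hcont.tendsto x).mono_left nhdsWithin_le_nhds
    have hDtend : Tendsto (fun τ => lam * D τ) (nhdsWithin x (Set.Iio x)) (nhds 0) := by
      have : Tendsto D (nhdsWithin x (Set.Iio x)) (nhds 0) := by
        have := (tendsto_const_nhds (α := ℝ)
          (x := ∫ ω, Real.exp (M * min (B ω) x) ∂μ)).sub hEtend
        rwa [sub_self] at this
      have h2 := this.const_mul lam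
      rwa [mul_zero] at h2
    -- final squeeze
    rw [tendsto_iff_dist_tendsto_zero]
    refine squeeze_zero' ?_ ?_ hDtend
    · exact Filter.Eventually.of_forall (fun τ => dist_nonneg)
    · filter_upwards [Ioo_mem_nhdsLT htx] with τ hτ
      rw [Real.dist_eq, abs_le]
      have h1 := hlower τ hτ.1.le hτ.2.le
      have h2 := hupper τ hτ.1.le hτ.2.le
      have h3 := hDnonneg τ hτ.2.le
      constructor <;> nlinarith
end part1
section part2
set_option linter.unusedSectionVars false
set_option maxHeartbeats 1000000
open ENNReal in
lemma tdr_barrier {Ω : Type*} [MeasurableSpace Ω] {μ : MeasureTheory.Measure Ω}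
    [MeasureTheory.IsProbabilityMeasure μ] {B : Ω → ℝ} (hB : Measurable B) (hB0 : ∀ ω, 0 ≤ B ω)
    {θ'' : ℝ} (hθ0 : 0 < θ'')
    (hni : ¬ Integrable (fun ω => Real.exp (θ'' * B ω)) μ) (K : ℝ) :
    ∀ᶠ τ : ℝ in atTop, K ≤ ∫ ω, Real.exp (θ'' * min (B ω) τ) ∂μ := by
  by_cases hex : ∃ n : ℕ, K ≤ ∫ ω, Real.exp (θ'' * min (B ω) (n:ℝ)) ∂μ
  · obtain ⟨n, hn⟩ := hex
    filter_upwards [eventually_ge_atTop (n:ℝ)] with τ hτ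
    refine hn.trans (integral_mono (tdr_int_trunc hB hB0 _ _) (tdr_int_trunc hB hB0 _ _)
      (fun ω => ?_))
    exact Real.exp_le_exp.2 (mul_le_mul_of_nonneg_left (min_le_min le_rfl hτ) hθ0.le)
  · exfalso
    push_neg at hex
    apply hni
    refine ⟨((hB.const_mul θ'').exp).aestronglyMeasurable, ?_⟩
    rw [MeasureTheory.hasFiniteIntegral_iff_ofReal
      (Filter.Eventually.of_forall (fun ω => (Real.exp_pos _).le))]
    have h1 : ∀ ω, ENNReal.ofReal (Real.exp (θ'' * B ω))
        = ⨆ n : ℕ, ENNReal.ofReal (Real.exp (θ'' * min (B ω) (n:ℝ))) := by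
      intro ω
      refine (iSup_eq_of_tendsto ?_ ?_).symm
      · intro m n hmn
        refine ENNReal.ofReal_le_ofReal (Real.exp_le_exp.2 ?_)
        exact mul_le_mul_of_nonneg_left (min_le_min le_rfl (Nat.cast_le.2 hmn)) hθ0.le
      · refine Filter.Tendsto.congr' ?_ tendsto_const_nhds
        filter_upwards [eventually_ge_atTop ⌈B ω⌉₊] with n hn
        rw [min_eq_left (le_trans (Nat.le_ceil (B ω)) (Nat.cast_le.2 hn))]
    have h2 : (∫⁻ ω, ENNReal.ofReal (Real.exp (θ'' * B ω)) ∂μ) ≤ ENNReal.ofReal K := by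
      calc (∫⁻ ω, ENNReal.ofReal (Real.exp (θ'' * B ω)) ∂μ)
          = ∫⁻ ω, ⨆ n : ℕ, ENNReal.ofReal (Real.exp (θ'' * min (B ω) (n:ℝ))) ∂μ :=
            lintegral_congr h1
        _ = ⨆ n : ℕ, ∫⁻ ω, ENNReal.ofReal (Real.exp (θ'' * min (B ω) (n:ℝ))) ∂μ := by
            refine MeasureTheory.lintegral_iSup' (fun n => ?_) ?_
            · exact (ENNReal.measurable_ofReal.comp
                (((hB.min measurable_const).const_mul θ'').exp)).aemeasurable
            · refine Filter.Eventually.of_forall (fun ω m n hmn => ?_)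
              refine ENNReal.ofReal_le_ofReal (Real.exp_le_exp.2 ?_)
              exact mul_le_mul_of_nonneg_left (min_le_min le_rfl (Nat.cast_le.2 hmn)) hθ0.le
        _ ≤ ENNReal.ofReal K := by
            refine iSup_le (fun n => ?_)
            rw [← MeasureTheory.ofReal_integral_eq_lintegral_ofReal
              (tdr_int_trunc hB hB0 _ _) (Filter.Eventually.of_forall (fun ω => (Real.exp_pos _).le))]
            exact ENNReal.ofReal_le_ofReal (hex n).le
    exact lt_of_le_of_lt h2 ENNReal.ofReal_lt_top
end part2
section part2main
set_option linter.unusedSectionVars false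
set_option maxHeartbeats 1000000

lemma tdr_part2 {Ω : Type*} [MeasurableSpace Ω] (μ : MeasureTheory.Measure Ω)
    [MeasureTheory.IsProbabilityMeasure μ] (B : Ω → ℝ) (hB : Measurable B) (hB0 : ∀ ω, 0 ≤ B ω)
    (γ : ℝ) (hγ : 0 < γ) (hexp : MeasureTheory.Integrable (fun ω => Real.exp (γ * B ω)) μ)
    (lam : ℝ) (hlam : 0 < lam) (hρ : lam * ∫ ω, B ω ∂μ < 1)
    (c : ℝ → ℝ)
    (hc : ∀ τ : ℝ, c τ = sSup (Set.range fun θ : ℝ =>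
        θ - lam * ((∫ ω, Real.exp (θ * min (B ω) τ) ∂μ) - 1)))
    (hS : ¬ ({u : ℝ | 0 ≤ u ∧ μ {ω | B ω ≤ u} = 1}).Nonempty) :
    Tendsto c atTop
        (nhds (sSup ((fun θ : ℝ => θ - lam * ((∫ ω, Real.exp (θ * B ω) ∂μ) - 1)) ''
          {θ : ℝ | Integrable (fun ω => Real.exp (θ * B ω)) μ}))) := by
  have hBint : Integrable B μ := tdr_int_B hB hB0 hγ hexp
  set I : Set ℝ := {θ : ℝ | Integrable (fun ω => Real.exp (θ * B ω)) μ} with hIdef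
  set ginf : ℝ → ℝ := fun θ => θ - lam * ((∫ ω, Real.exp (θ * B ω) ∂μ) - 1) with hginfdef
  set L := sSup (ginf '' I) with hLdef
  set g : ℝ → ℝ → ℝ := fun τ θ => θ - lam * ((∫ ω, Real.exp (θ * min (B ω) τ) ∂μ) - 1) with hgdef
  have hgz : ∀ τ, g τ 0 = 0 := fun τ => tdr_g_zero lam τ
  have hI0 : (0:ℝ) ∈ I := by
    have h1 : (fun ω => Real.exp ((0:ℝ) * B ω)) = fun _ => (1:ℝ) := by
      funext ω; simp
    simpa only [hIdef, Set.mem_setOf_eq, h1] using (integrable_const (1:ℝ))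
  have hginf0 : ginf 0 = 0 := by simp [hginfdef]
  set t : ℝ := 1 with htdef
  have ht : (0:ℝ) < t := one_pos
  have hp0 : 0 < (μ {ω | t < B ω}).toReal := by
    refine ENNReal.toReal_pos ?_ (measure_ne_top μ _)
    intro h0
    have hms : MeasurableSet {ω | t < B ω} := measurableSet_lt measurable_const hB
    have hcompl : μ {ω | B ω ≤ t} = 1 := by
      have h2 : {ω | B ω ≤ t} = {ω | t < B ω}ᶜ := by ext ω; simp [not_lt]
      rw [h2, MeasureTheory.prob_compl_eq_one_sub hms, h0, tsub_zero]
    exact hS ⟨t, ⟨ht.le, hcompl⟩⟩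
  set A := lam * (μ {ω | t < B ω}).toReal * t^2/4 with hAdef
  have hA : 0 < A := by positivity
  set M := max 1 ((1+lam)/A) with hMdef
  have hM0 : (0:ℝ) ≤ M := le_trans zero_le_one (le_max_left _ _)
  have hkeyint : ∀ (θ τ : ℝ), Integrable (fun ω => Real.exp (θ * min (B ω) τ)) μ :=
    tdr_int_trunc hB hB0
  have hBft : ∀ ω, t < B ω → t ≤ B ω := fun ω h => h.le
  have hBfB : ∀ ω, B ω ≤ B ω := fun ω => le_rfl
  have hbddI : BddAbove (ginf '' I) := by
    refine ⟨max 0 (lam + 1/(4*A)), ?_⟩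
    rintro v ⟨θ, hθI, rfl⟩
    exact tdr_Uall hB hlam hBint hρ ht hBint hθI hB0 hBft hBfB hA
  have hL0 : 0 ≤ L := by
    have := le_csSup hbddI (Set.mem_image_of_mem ginf hI0)
    rwa [hginf0] at this
  have hbdd : ∀ τ : ℝ, t ≤ τ → BddAbove (Set.range (g τ)) := by
    intro τ hτ
    refine ⟨max 0 (lam + 1/(4*A)), ?_⟩
    rintro v ⟨θ, rfl⟩
    obtain ⟨hf0, hft, hfB⟩ := tdr_min_props hB0 ht hτ
    exact tdr_Uall hB hlam hBint hρ ht (tdr_int_min hB hB0 τ) (hkeyint θ τ) hf0 hft hfB hA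
  have hczero : ∀ τ : ℝ, t ≤ τ → 0 ≤ c τ := by
    intro τ hτ
    rw [hc τ]
    have := le_csSup (hbdd τ hτ) (Set.mem_range_self (f := g τ) 0)
    rwa [hgz τ] at this
  have hEθmono : ∀ (τ : ℝ), 0 < τ → ∀ θ₁ θ₂ : ℝ, θ₁ ≤ θ₂ →
      (∫ ω, Real.exp (θ₁ * min (B ω) τ) ∂μ) ≤ ∫ ω, Real.exp (θ₂ * min (B ω) τ) ∂μ := by
    intro τ hτ θ₁ θ₂ h12
    refine integral_mono (hkeyint θ₁ τ) (hkeyint θ₂ τ) (fun ω => ?_)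
    exact Real.exp_le_exp.2 (mul_le_mul_of_nonneg_right h12 (le_min (hB0 ω) hτ.le))
  have hlower : ∀ τ : ℝ, t ≤ τ → L ≤ c τ := by
    intro τ hτ
    rw [hLdef]
    refine Real.sSup_le ?_ (hczero τ hτ)
    rintro v ⟨θ, hθI, rfl⟩
    rcases le_total θ 0 with hθ | hθ
    · exact le_trans (tdr_U1 hlam hBint hρ hθ hBint hθI hB0 hBfB) (hczero τ hτ)
    · have h1 : ginf θ ≤ g τ θ := by
        have h2 : (∫ ω, Real.exp (θ * min (B ω) τ) ∂μ) ≤ ∫ ω, Real.exp (θ * B ω) ∂μ := by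
          refine integral_mono (hkeyint θ τ) hθI (fun ω => ?_)
          exact Real.exp_le_exp.2 (mul_le_mul_of_nonneg_left (min_le_left _ _) hθ)
        simp only [hginfdef, hgdef]
        nlinarith
      rw [hc τ]
      exact le_trans h1 (le_csSup (hbdd τ hτ) (Set.mem_range_self θ))
  have hIdc : ∀ θ' θ : ℝ, θ' ≤ θ → θ ∈ I → θ' ∈ I := by
    intro θ' θ h hθ
    exact tdr_int_exp_mono hB hB0 h hθ
  have hDtend : ∀ θ' : ℝ, 0 ≤ θ' → θ' ∈ I → Tendsto
      (fun τ => lam * ((∫ ω, Real.exp (θ' * B ω) ∂μ) - ∫ ω, Real.exp (θ' * min (B ω) τ) ∂μ))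
      atTop (nhds 0) := by
    intro θ' hθ'0 hθ'I
    have hEtend : Tendsto (fun τ : ℝ => ∫ ω, Real.exp (θ' * min (B ω) τ) ∂μ) atTop
        (nhds (∫ ω, Real.exp (θ' * B ω) ∂μ)) := by
      refine MeasureTheory.tendsto_integral_filter_of_dominated_convergence
        (fun ω => Real.exp (θ' * B ω)) ?_ ?_ hθ'I ?_
      · exact Filter.Eventually.of_forall (fun τ => tdr_meas_trunc hB θ' τ)
      · refine Filter.Eventually.of_forall (fun τ => Filter.Eventually.of_forall (fun ω => ?_))
        rw [Real.norm_eq_abs, abs_of_pos (Real.exp_pos _)]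
        exact Real.exp_le_exp.2 (mul_le_mul_of_nonneg_left (min_le_left _ _) hθ'0)
      · refine Filter.Eventually.of_forall (fun ω => ?_)
        refine Filter.Tendsto.congr' ?_ tendsto_const_nhds
        filter_upwards [eventually_ge_atTop (B ω)] with τ hτ
        rw [min_eq_left hτ]
    have h2 := ((tendsto_const_nhds (α := ℝ)
      (x := ∫ ω, Real.exp (θ' * B ω) ∂μ)).sub hEtend).const_mul lam
    rwa [sub_self, mul_zero] at h2
  rw [Metric.tendsto_nhds]
  intro ε hε
  have hchoice : ∃ θ' θ'' : ℝ, 0 ≤ θ' ∧ θ' ∈ I ∧ θ' ≤ θ'' ∧ θ'' - θ' ≤ ε/2 ∧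
      (M ≤ θ'' ∨ (0 < θ'' ∧ θ'' ∉ I)) := by
    by_cases hN : {θ : ℝ | 0 < θ ∧ θ ∉ I}.Nonempty
    · have hbb : BddBelow {θ : ℝ | 0 < θ ∧ θ ∉ I} := ⟨0, fun θ hθ => hθ.1.le⟩
      set θc := sInf {θ : ℝ | 0 < θ ∧ θ ∉ I} with hθcdef
      have hγle : γ ≤ θc := by
        refine le_csInf hN (fun θ hθ => ?_)
        by_contra hcon
        push_neg at hcon
        exact hθ.2 (hIdc θ γ hcon.le hexp)
      have hθc0 : 0 < θc := lt_of_lt_of_le hγ hγle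
      obtain ⟨θ'', hθ''N, hθ''lt⟩ := exists_lt_of_csInf_lt hN
        (show sInf {θ : ℝ | 0 < θ ∧ θ ∉ I} < θc + ε/4 by rw [← hθcdef]; linarith)
      have hcle := csInf_le hbb hθ''N
      rw [← hθcdef] at hcle
      have hs0 : 0 < min (θc/2) (ε/4) := lt_min (by positivity) (by positivity)
      have hs1 : min (θc/2) (ε/4) ≤ θc/2 := min_le_left _ _
      have hs2 : min (θc/2) (ε/4) ≤ ε/4 := min_le_right _ _
      refine ⟨θc - min (θc/2) (ε/4), θ'', by linarith, ?_, by linarith, by linarith,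
        Or.inr ⟨hθ''N.1, hθ''N.2⟩⟩
      by_contra hcon
      have hmem : θc - min (θc/2) (ε/4) ∈ {θ : ℝ | 0 < θ ∧ θ ∉ I} := ⟨by linarith, hcon⟩
      have := csInf_le hbb hmem
      rw [← hθcdef] at this
      linarith
    · rw [Set.not_nonempty_iff_eq_empty] at hN
      have hMI : M ∈ I := by
        by_contra hcon
        have h3 : M ∈ {θ : ℝ | 0 < θ ∧ θ ∉ I} := by
          refine ⟨?_, hcon⟩
          have : (1:ℝ) ≤ M := le_max_left _ _
          linarith
        rw [hN] at h3
        exact h3.elim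
      exact ⟨M, M, hM0, hMI, le_rfl, by linarith, Or.inl le_rfl⟩
  obtain ⟨θ', θ'', hθ'0, hθ'I, hθ'le, hgap, hbar⟩ := hchoice
  have hbarrier : ∀ᶠ τ : ℝ in atTop, ∀ θ : ℝ, θ'' ≤ θ → θ ≤ M → g τ θ ≤ 0 := by
    rcases hbar with hM | ⟨hθ''0, hθ''ni⟩
    · filter_upwards [eventually_ge_atTop t] with τ hτt θ hθ1 hθ2
      obtain ⟨hf0, hft, hfB⟩ := tdr_min_props hB0 ht hτt
      exact tdr_UgeM hB hlam ht (hkeyint θ τ) hft hA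
        (le_trans (le_of_eq hMdef.symm) (le_trans hM hθ1))
    · filter_upwards [tdr_barrier hB hB0 hθ''0 hθ''ni ((M + lam)/lam + 1),
        eventually_ge_atTop t] with τ hτK hτt θ hθ1 hθ2
      have hEm : (∫ ω, Real.exp (θ'' * min (B ω) τ) ∂μ) ≤ ∫ ω, Real.exp (θ * min (B ω) τ) ∂μ :=
        hEθmono τ (lt_of_lt_of_le ht hτt) θ'' θ hθ1
      have hK : (M + lam)/lam + 1 ≤ ∫ ω, Real.exp (θ * min (B ω) τ) ∂μ := le_trans hτK hEm
      have h5 : lam * ((M + lam)/lam + 1) ≤ lam * ∫ ω, Real.exp (θ * min (B ω) τ) ∂μ :=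
        mul_le_mul_of_nonneg_left hK hlam.le
      have hdiv : lam * ((M + lam)/lam) = M + lam := by field_simp
      simp only [hgdef]
      nlinarith
  have hDev : ∀ᶠ τ : ℝ in atTop,
      lam * ((∫ ω, Real.exp (θ' * B ω) ∂μ) - ∫ ω, Real.exp (θ' * min (B ω) τ) ∂μ) < ε/4 :=
    (hDtend θ' hθ'0 hθ'I).eventually_lt_const (by positivity)
  filter_upwards [hbarrier, hDev, eventually_ge_atTop t] with τ hbarτ hDτ hτt
  have hup : c τ ≤ L + 3*ε/4 := by
    -- first : the bound for θ ∈ [0, θ']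
    have hmid : ∀ θ : ℝ, 0 ≤ θ → θ ≤ θ' → g τ θ ≤ L + ε/4 := by
      intro θ hθ0 hθle
      have hθI : θ ∈ I := hIdc θ θ' hθle hθ'I
      have hdiffle : (∫ ω, Real.exp (θ * B ω) ∂μ) - (∫ ω, Real.exp (θ * min (B ω) τ) ∂μ)
          ≤ (∫ ω, Real.exp (θ' * B ω) ∂μ) - ∫ ω, Real.exp (θ' * min (B ω) τ) ∂μ := by
        have hint1 : Integrable (fun ω => Real.exp (θ * B ω)
            - Real.exp (θ * min (B ω) τ)) μ := hθI.sub (hkeyint θ τ)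
        have hint2 : Integrable (fun ω => Real.exp (θ' * B ω)
            - Real.exp (θ' * min (B ω) τ)) μ := hθ'I.sub (hkeyint θ' τ)
        have h6 := integral_mono hint1 hint2 (fun ω => tdr_exp_diff_mono hθ0 hθle
          (le_min (hB0 ω) (lt_of_lt_of_le ht hτt).le) (min_le_left _ _))
        rwa [integral_sub hθI (hkeyint θ τ), integral_sub hθ'I (hkeyint θ' τ)] at h6
      have hginfle : ginf θ ≤ L := le_csSup hbddI ⟨θ, hθI, rfl⟩
      simp only [hginfdef, hgdef] at hginfle ⊢
      nlinarith
    rw [hc τ]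
    refine Real.sSup_le ?_ (by linarith)
    rintro v ⟨θ, rfl⟩
    have hvg : (fun θ : ℝ => θ - lam * ((∫ ω, Real.exp (θ * min (B ω) τ) ∂μ) - 1)) θ
        = g τ θ := rfl
    rw [hvg]
    rcases le_total θ 0 with hθ | hθ
    · obtain ⟨hf0, hft, hfB⟩ := tdr_min_props hB0 ht hτt
      have := tdr_U1 hlam hBint hρ hθ (tdr_int_min hB hB0 τ) (hkeyint θ τ) hf0 hfB
      simp only [hgdef]
      linarith
    · rcases le_total θ θ' with hθa | hθa
      · linarith [hmid θ hθ hθa]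
      · rcases le_total θ θ'' with hθb | hθb
        · have hstep : g τ θ ≤ g τ θ' + (θ - θ') := by
            have h7 := hEθmono τ (lt_of_lt_of_le ht hτt) θ' θ hθa
            simp only [hgdef]
            nlinarith
          have h8 := hmid θ' hθ'0 le_rfl
          calc g τ θ ≤ g τ θ' + (θ - θ') := hstep
            _ ≤ (L + ε/4) + (θ'' - θ') := by
                have : θ - θ' ≤ θ'' - θ' := by linarith
                linarith
            _ ≤ L + 3*ε/4 := by linarith
        · rcases le_total θ M with hθc | hθc
          · refine le_trans (hbarτ θ hθb hθc) (by linarith)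
          · obtain ⟨hf0, hft, hfB⟩ := tdr_min_props hB0 ht hτt
            have := tdr_UgeM hB hlam ht (hkeyint θ τ) hft hA
              (le_trans (le_of_eq hMdef.symm) hθc)
            simp only [hgdef]
            linarith
  have hlo := hlower τ hτt
  rw [Real.dist_eq, abs_lt]
  constructor <;> linarith
end part2main

theorem truncated_decay_rate_continuity {Ω : Type*} [MeasurableSpace Ω] (μ : Measure Ω)
    [IsProbabilityMeasure μ] (B : Ω → ℝ) (hB : Measurable B) (hB0 : ∀ ω, 0 ≤ B ω)
    (γ : ℝ) (hγ : 0 < γ) (hexp : Integrable (fun ω => Real.exp (γ * B ω)) μ)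
    (lam : ℝ) (hlam : 0 < lam) (hρ : lam * ∫ ω, B ω ∂μ < 1)
    (c : ℝ → ℝ)
    (hc : ∀ τ : ℝ, c τ = sSup (Set.range fun θ : ℝ =>
        θ - lam * ((∫ ω, Real.exp (θ * min (B ω) τ) ∂μ) - 1))) :
    -- S is the set of finite upper bounds for B; S nonempty means x_F = sInf S is finite
    (({u : ℝ | 0 ≤ u ∧ μ {ω | B ω ≤ u} = 1}).Nonempty →
      Tendsto c (nhdsWithin (sInf {u : ℝ | 0 ≤ u ∧ μ {ω | B ω ≤ u} = 1})
          (Set.Iio (sInf {u : ℝ | 0 ≤ u ∧ μ {ω | B ω ≤ u} = 1})))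
        (nhds (c (sInf {u : ℝ | 0 ≤ u ∧ μ {ω | B ω ≤ u} = 1})))) ∧
    (¬ ({u : ℝ | 0 ≤ u ∧ μ {ω | B ω ≤ u} = 1}).Nonempty →
      Tendsto c atTop
        (nhds (sSup ((fun θ : ℝ => θ - lam * ((∫ ω, Real.exp (θ * B ω) ∂μ) - 1)) ''
          {θ : ℝ | Integrable (fun ω => Real.exp (θ * B ω)) μ})))) := by
  exact ⟨fun hS => tdr_part1 μ B hB hB0 γ hγ hexp lam hlam hρ c hc hS,
    fun hS => tdr_part2 μ B hB hB0 γ hγ hexp lam hlam hρ c hc hS⟩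
end
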